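/- Suppose the zeros a_1,…,a_N of W_N inside Σ_N are pairwise distinct (and simple zeros of W_N). Then the biorthogonality relations ∫_ℝ e^{a_m x} ψ_k(e^x) dx = δ_{mk} hold for all k, m = 1,…,N, where ψ_m(y) = (2πi W_N'(a_m))^{-1} ∫_{ℓ_N} W_N(v) y^{-v} (v - a_m)^{-1} dv; these integrals converge absolutely since ψ_m(e^x) = O(e^{-(α_N+δ)x}) as x → -∞ and ψ_m(e^x) = O(e^{-(β_N-δ)x}) as x → +∞ for every δ > 0. -/

import Mathlib

/-!
Statement 1: under Assumption 1, with pairwise distinct simple zeros `a_1,…,a_N` of `W`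
inside `Σ_N`, the biorthogonality relations `∫_ℝ e^{a_m x} ψ_k(e^x) dx = δ_{mk}` hold;
the integrals converge absolutely since `ψ_m(e^x) = O(e^{-(α+δ)x})` as `x → -∞` and
`ψ_m(e^x) = O(e^{-(β-δ)x})` as `x → +∞`, for every `δ > 0`.
-/

open MeasureTheory Complex

noncomputable section

/-- Integral of `f` along the parametrized loop `γ` (parameter interval `[0,1]`). -/
def loopIntegral (γ : ℝ → ℂ) (f : ℂ → ℂ) : ℂ :=
  ∫ s in (0:ℝ)..1, f (γ s) * deriv γ s

/-- Integral of `f` along the upward-oriented vertical line `Re z = c`. -/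
def lineIntegral (c : ℝ) (f : ℂ → ℂ) : ℂ :=
  Complex.I * ∫ t : ℝ, f (c + t * Complex.I)

/-- Winding number of the loop `γ` around `z`. -/
def windingNumber (γ : ℝ → ℂ) (z : ℂ) : ℂ :=
  (2 * (Real.pi : ℂ) * Complex.I)⁻¹ * loopIntegral γ (fun w => (w - z)⁻¹)

/-- `ψ_m(y) = (2πi W'(a))⁻¹ ∫_{ℓ_N} W(v) y^{-v} (v - a)⁻¹ dv`. -/
def psiFun (c : ℝ) (W : ℂ → ℂ) (a : ℂ) (y : ℝ) : ℂ :=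
  (2 * (Real.pi : ℂ) * Complex.I * deriv W a)⁻¹ *
    lineIntegral c (fun v => W v * (y : ℂ) ^ (-v) / (v - a))

/-!
Put `g = dslope W a_k`. Since `W a_k = 0`, `g` is holomorphic on the strip, `O(|v|^{-1-ε})` there,
and `ψ_k(e^x) = (2πi W'(a_k))⁻¹ ∫_{c+iℝ} g(v) e^{-vx} dv`. Cauchy's theorem on tall rectangles lets
the line of integration move anywhere in the strip, which gives the bounds `O(e^{-c'x})` for every
`α < c' < β`, hence the decay and the integrability. On the line through `u = a_m` the function
`e^{ux} ψ_k(e^x)` is, up to a constant factor and a rescaling of `x`, the Fourier transform of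
`t ↦ g(u + it)`, so Fourier inversion gives `∫ e^{ux} ψ_k(e^x) dx = g(u) / W'(a_k)`. This is `1`
for `m = k`, and for `m ≠ k` it is `(W a_m - W a_k) / ((a_m - a_k) W'(a_k)) = 0`.
-/

open Set Filter Topology Asymptotics Bornology
open scoped FourierTransform

lemma isBigO_norm_rpow_neg_one_add_norm {E : Type*} [NormedAddCommGroup E] {κ : ℝ}
    (hκ : 0 ≤ κ) :
    (fun z : E => ‖z‖ ^ (-κ)) =O[cobounded E] (fun z => (1 + ‖z‖) ^ (-κ)) := by
  refine isBigO_iff.2 ⟨2 ^ κ, (eventually_cobounded_le_norm 1).mono fun z hz => ?_⟩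
  have hz0 : 0 < ‖z‖ := by linarith
  rw [Real.norm_of_nonneg (by positivity), Real.norm_of_nonneg (by positivity)]
  calc ‖z‖ ^ (-κ) = 2 ^ κ * (2 * ‖z‖) ^ (-κ) := by
        rw [Real.mul_rpow (by norm_num) hz0.le, Real.rpow_neg (by norm_num : (0:ℝ) ≤ 2),
          ← mul_assoc, mul_inv_cancel₀ (by positivity), one_mul]
    _ ≤ 2 ^ κ * (1 + ‖z‖) ^ (-κ) := mul_le_mul_of_nonneg_left
        (Real.rpow_le_rpow_of_nonpos (by positivity) (by linarith) (by linarith)) (by positivity)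

lemma isBigO_sub_inv_cobounded (b : ℂ) :
    (fun z : ℂ => (z - b)⁻¹) =O[cobounded ℂ] (fun z => ‖z‖⁻¹) := by
  refine isBigO_iff.2 ⟨2, (eventually_cobounded_le_norm (2 * ‖b‖ + 1)).mono fun z hz => ?_⟩
  have hzb : ‖z‖ / 2 ≤ ‖z - b‖ := by linarith [norm_sub_norm_le z b, norm_nonneg b]
  have hz0 : 0 < ‖z‖ := by linarith [norm_nonneg b]
  rw [norm_inv, norm_inv, Real.norm_of_nonneg (norm_nonneg _)]
  calc ‖z - b‖⁻¹ ≤ (‖z‖ / 2)⁻¹ := inv_anti₀ (by positivity) hzb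
    _ = 2 * ‖z‖⁻¹ := by rw [inv_div, div_eq_mul_inv]

lemma isBigO_dslope_of_isBigO {κ : ℝ} {f : ℂ → ℂ} {l : Filter ℂ} (hl : l ≤ cobounded ℂ)
    (hf : f =O[l] (fun z => ‖z‖ ^ (-κ))) {b : ℂ} (hb : f b = 0) :
    dslope f b =O[l] (fun z => ‖z‖ ^ (-(κ + 1))) := by
  have hfar : ∀ᶠ z in l, ‖b‖ + 1 ≤ ‖z‖ := hl (eventually_cobounded_le_norm _)
  have hslope : dslope f b =ᶠ[l] fun z => (z - b)⁻¹ * f z := hfar.mono fun z hz => by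
    have hzb : z ≠ b := by rintro rfl; linarith
    rw [dslope_of_ne f hzb, slope_def_field, hb, sub_zero, div_eq_inv_mul]
  have hpow : (fun z : ℂ => ‖z‖⁻¹ * ‖z‖ ^ (-κ)) =ᶠ[l] fun z => ‖z‖ ^ (-(κ + 1)) :=
    hfar.mono fun z hz => by
      dsimp only
      rw [neg_add', Real.rpow_sub_one (by linarith [norm_nonneg b]), div_eq_inv_mul]
  exact (((isBigO_sub_inv_cobounded b).mono hl).mul hf).congr' hslope.symm hpow

lemma tendsto_zero_of_isBigO_norm_rpow_neg {κ : ℝ} {f : ℂ → ℂ} {l : Filter ℂ} (hκ : 0 < κ)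
    (hl : l ≤ cobounded ℂ) (hf : f =O[l] (fun z => ‖z‖ ^ (-κ))) : Tendsto f l (𝓝 0) :=
  hf.trans_tendsto (((tendsto_rpow_neg_atTop hκ).comp tendsto_norm_cobounded_atTop).mono_left hl)

lemma ofReal_exp_cpow_neg (x : ℝ) (v : ℂ) : (Real.exp x : ℂ) ^ (-v) = cexp (-(v * x)) := by
  rw [cpow_def_of_ne_zero (by exact_mod_cast (Real.exp_pos x).ne'),
    ← ofReal_log (Real.exp_pos x).le, Real.log_exp, mul_comm, neg_mul]

lemma tendsto_integral_verticalLine {c : ℝ} {f : ℂ → ℂ}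
    (hf : Integrable fun t : ℝ => f (c + t * I)) :
    Tendsto (fun T : ℝ => I * ∫ t in -T..T, f (c + t * I)) atTop (𝓝 (lineIntegral c f)) :=
  (intervalIntegral_tendsto_integral hf tendsto_neg_atTop_atBot tendsto_id).const_mul I

/-- `2πi` times the two-sided inverse Laplace transform of `f` along `Re v = c`, evaluated
at `-x`. -/
def lineLaplace (c : ℝ) (f : ℂ → ℂ) (x : ℝ) : ℂ :=
  lineIntegral c (fun v => f v * cexp (-(v * x)))

lemma norm_lineLaplace_le (c : ℝ) (f : ℂ → ℂ) (x : ℝ) :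
    ‖lineLaplace c f x‖ ≤ (∫ t : ℝ, ‖f (c + t * I)‖) * Real.exp (-(c * x)) := by
  rw [lineLaplace, lineIntegral, norm_mul, norm_I, one_mul, ← integral_mul_const]
  refine (norm_integral_le_integral_norm _).trans_eq (integral_congr_ae (.of_forall fun t => ?_))
  simp [norm_exp]

lemma exp_mul_lineLaplace_eq_fourier (u : ℂ) (f : ℂ → ℂ) (x : ℝ) :
    cexp (u * x) * lineLaplace u.re f x =
      I * 𝓕 (fun s : ℝ => f (u + s * I)) (x / (2 * Real.pi)) := by
  rw [lineLaplace, lineIntegral, mul_left_comm, ← integral_const_mul,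
    ← integral_add_right_eq_self _ u.im, Real.fourier_real_eq_integral_exp_smul]
  congr 2
  ext s
  have hline : (u.re : ℂ) + ((s + u.im : ℝ) : ℂ) * I = u + s * I := by
    apply Complex.ext <;> simp [add_comm]
  rw [hline, smul_eq_mul, mul_left_comm, ← Complex.exp_add, mul_comm]
  congr 2
  push_cast
  field_simp
  ring

lemma continuous_lineLaplace {c : ℝ} {f : ℂ → ℂ} (hf : Integrable fun t : ℝ => f (c + t * I)) :
    Continuous (lineLaplace c f) := by
  have hfourier : Continuous (𝓕 fun t : ℝ => f (c + t * I)) :=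
    VectorFourier.fourierIntegral_continuous Real.continuous_fourierChar
      (innerSL ℝ).continuous₂ hf
  have heq : lineLaplace c f = fun x : ℝ =>
      cexp (-(c * x)) * (I * 𝓕 (fun t : ℝ => f (c + t * I)) (x / (2 * Real.pi))) := by
    ext x
    have h := exp_mul_lineLaplace_eq_fourier (c : ℂ) f x
    rw [ofReal_re] at h
    rw [← h, ← mul_assoc, ← Complex.exp_add, neg_add_cancel, Complex.exp_zero, one_mul]
  rw [heq]
  fun_prop

lemma integral_exp_mul_lineLaplace {u : ℂ} {f : ℂ → ℂ}
    (hf : Integrable fun s : ℝ => f (u + s * I))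
    (hcont : ContinuousAt (fun s : ℝ => f (u + s * I)) 0)
    (hF : Integrable fun x : ℝ => cexp (u * x) * lineLaplace u.re f x) :
    ∫ x : ℝ, cexp (u * x) * lineLaplace u.re f x = 2 * Real.pi * I * f u := by
  have h2π : 2 * Real.pi ≠ 0 := by positivity
  simp_rw [exp_mul_lineLaplace_eq_fourier] at hF ⊢
  have hFG : Integrable (𝓕 fun s : ℝ => f (u + s * I)) := by
    have := hF.const_mul I⁻¹
    simp_rw [inv_mul_cancel_left₀ I_ne_zero] at this
    exact (integrable_comp_div_iff _ h2π).1 this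
  have hinv := hf.fourierInv_fourier_eq hFG hcont
  rw [Real.fourierInv_eq'] at hinv
  simp only [RCLike.inner_apply, Real.ringHom_apply, zero_mul, mul_zero, ofReal_zero, exp_zero,
    smul_eq_mul, one_mul, add_zero] at hinv
  rw [integral_const_mul, Measure.integral_comp_div, hinv, abs_of_pos (by positivity),
    Complex.real_smul]
  push_cast
  ring

lemma psiFun_exp_eq {c : ℝ} {W : ℂ → ℂ} {b : ℂ} (hbc : b.re < c) (hb : W b = 0) (x : ℝ) :
    psiFun c W b (Real.exp x) =
      (2 * Real.pi * I * deriv W b)⁻¹ * lineLaplace c (dslope W b) x := by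
  rw [psiFun, lineLaplace, lineIntegral, lineIntegral]
  congr 3
  ext t
  have hne : (c + t * I : ℂ) ≠ b := fun h => hbc.ne' (by simpa using congrArg re h)
  rw [ofReal_exp_cpow_neg, dslope_of_ne W hne, slope_def_field, hb, sub_zero]
  ring

def verticalStrip (α β : ℝ) : Set ℂ := {z | α < z.re ∧ z.re < β}

section VerticalStrip

variable {α β κ ε c c₁ c₂ : ℝ} {f W : ℂ → ℂ} {b u : ℂ}

local notation "𝓢" => cobounded ℂ ⊓ 𝓟 (verticalStrip α β)

lemma isOpen_verticalStrip : IsOpen (verticalStrip α β) :=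
  (isOpen_lt continuous_const continuous_re).inter (isOpen_lt continuous_re continuous_const)

lemma differentiableOn_dslope_verticalStrip (hd : DifferentiableOn ℂ f (verticalStrip α β))
    (hb : b ∈ verticalStrip α β) : DifferentiableOn ℂ (dslope f b) (verticalStrip α β) :=
  (differentiableOn_dslope (isOpen_verticalStrip.mem_nhds hb)).2 hd

lemma ofReal_add_mul_I_mem_verticalStrip {x : ℝ} (h₁ : α < x) (h₂ : x < β) (t : ℝ) :
    (x + t * I : ℂ) ∈ verticalStrip α β := by
  simpa [verticalStrip] using ⟨h₁, h₂⟩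

lemma tendsto_ofReal_add_mul_I_cobounded {s : Set ℝ} (hs : s ⊆ Ioo α β) :
    Tendsto (fun p : ℝ × ℝ => (p.2 + p.1 * I : ℂ)) (cocompact ℝ ×ˢ 𝓟 s)
      (cobounded ℂ ⊓ 𝓟 (verticalStrip α β)) := by
  refine tendsto_inf.2 ⟨?_, tendsto_principal.2 ?_⟩
  · rw [← tendsto_norm_atTop_iff_cobounded]
    refine tendsto_atTop_mono (fun p => ?_) (tendsto_norm_cocompact_atTop.comp tendsto_fst)
    simpa using abs_im_le_norm (p.2 + p.1 * I : ℂ)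
  · filter_upwards [prod_mem_prod univ_mem (mem_principal_self s)] with p hp
    exact ofReal_add_mul_I_mem_verticalStrip (hs hp.2).1 (hs hp.2).2 p.1

lemma tendsto_verticalLine_cobounded (h₁ : α < c) (h₂ : c < β) :
    Tendsto (fun t : ℝ => (c + t * I : ℂ)) (cocompact ℝ)
      (cobounded ℂ ⊓ 𝓟 (verticalStrip α β)) := by
  have hc : ({c} : Set ℝ) ⊆ Ioo α β := singleton_subset_iff.2 ⟨h₁, h₂⟩
  exact (tendsto_ofReal_add_mul_I_cobounded hc).comp
    (tendsto_id.prodMk (tendsto_principal.2 (.of_forall fun _ => rfl)))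

lemma isBigO_cexp_neg_mul_one (x : ℝ) :
    (fun v => cexp (-(v * x))) =O[𝓟 (verticalStrip α β)] (fun _ => (1 : ℝ)) := by
  refine isBigO_iff.2 ⟨Real.exp (|x| * max |α| |β|), eventually_principal.2 fun v hv => ?_⟩
  have hre : |v.re| ≤ max |α| |β| := abs_le_max_abs_abs hv.1.le hv.2.le
  rw [norm_exp, norm_one, mul_one, Real.exp_le_exp]
  calc (-(v * x)).re = -(v.re * x) := by simp
    _ ≤ |v.re| * |x| := by rw [← abs_mul]; exact neg_le_abs _
    _ ≤ |x| * max |α| |β| := by rw [mul_comm]; gcongr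

lemma isBigO_verticalStrip_of_bound {M R : ℝ}
    (h : ∀ z : ℂ, α < z.re → z.re < β → R ≤ ‖z‖ → ‖f z‖ ≤ M * ‖z‖ ^ (-κ)) :
    f =O[cobounded ℂ ⊓ 𝓟 (verticalStrip α β)] (fun z => ‖z‖ ^ (-κ)) :=
  .of_bound M <| eventually_inf_principal.2 <| (eventually_cobounded_le_norm R).mono
    fun z hR hz => by
      rw [Real.norm_of_nonneg (by positivity)]
      exact h z hz.1 hz.2 hR

lemma integrable_verticalLine_of_isBigO (hf : ContinuousOn f (verticalStrip α β))
    (hdec : f =O[𝓢] (fun z => ‖z‖ ^ (-κ))) (hκ : 1 < κ) (h₁ : α < c) (h₂ : c < β) :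
    Integrable (fun t : ℝ => f (c + t * I)) := by
  have hline := tendsto_verticalLine_cobounded h₁ h₂
  refine (hf.comp_continuous (by fun_prop) (ofReal_add_mul_I_mem_verticalStrip h₁ h₂)
    ).locallyIntegrable.integrable_of_isBigO_cocompact (g := fun t : ℝ => (1 + ‖t‖) ^ (-κ)) ?_
    ((integrable_one_add_norm (E := ℝ) (by simpa using hκ)).integrableAtFilter _)
  refine (hdec.comp_tendsto hline).trans <|
    (((isBigO_norm_rpow_neg_one_add_norm (by linarith)).comp_tendsto
      (hline.mono_right inf_le_left)).trans (isBigO_of_le _ fun t => ?_))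
  rw [Function.comp_apply, Real.norm_of_nonneg (by positivity),
    Real.norm_of_nonneg (by positivity)]
  refine Real.rpow_le_rpow_of_nonpos (by positivity) ?_ (by linarith)
  simpa using abs_im_le_norm (c + t * I : ℂ)

lemma tendsto_integral_horizontal_segment (hf : Tendsto f 𝓢 (𝓝 0))
    (h₁ : α < c₁) (h₂ : c₂ < β) (h₁₂ : c₁ ≤ c₂) :
    Tendsto (fun T : ℝ => ∫ x in c₁..c₂, f (x + T * I)) (cocompact ℝ) (𝓝 0) := by
  rw [NormedAddGroup.tendsto_nhds_zero]
  intro ε hε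
  have hη : 0 < ε / (c₂ - c₁ + 1) := div_pos hε (by linarith)
  have hsmall := (hf.comp (tendsto_ofReal_add_mul_I_cobounded (s := Icc c₁ c₂)
    fun x hx => ⟨h₁.trans_le hx.1, hx.2.trans_lt h₂⟩)).norm.eventually
    (gt_mem_nhds (by simpa using hη))
  filter_upwards [eventually_prod_principal_iff.1 hsmall] with T hT
  calc ‖∫ x in c₁..c₂, f (x + T * I)‖ ≤ ε / (c₂ - c₁ + 1) * |c₂ - c₁| :=
        intervalIntegral.norm_integral_le_of_norm_le_const fun x hx =>
          (hT x (by rw [uIoc_of_le h₁₂] at hx; exact Ioc_subset_Icc_self hx)).le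
    _ < ε := by
        rw [abs_of_nonneg (by linarith), div_mul_eq_mul_div, div_lt_iff₀ (by linarith)]
        nlinarith

lemma verticalLine_integral_sub_eq_horizontal (hd : DifferentiableOn ℂ f (verticalStrip α β))
    (h₁ : α < c₁) (h₂ : c₂ < β) (h₁₂ : c₁ ≤ c₂) (T : ℝ) :
    I * (∫ t in -T..T, f (c₂ + t * I)) - I * ∫ t in -T..T, f (c₁ + t * I) =
      (∫ x in c₁..c₂, f (x + T * I)) - ∫ x in c₁..c₂, f (x + (-T : ℝ) * I) := by
  have hrect : (∫ x in c₁..c₂, f (x + (-T : ℝ) * I)) - (∫ x in c₁..c₂, f (x + T * I)) +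
      I • (∫ t in -T..T, f (c₂ + t * I)) - I • (∫ t in -T..T, f (c₁ + t * I)) = 0 :=
    integral_boundary_rect_eq_zero_of_differentiableOn f ⟨c₁, -T⟩ ⟨c₂, T⟩ <|
      hd.mono fun z ⟨hre, _⟩ => by
        change z.re ∈ uIcc c₁ c₂ at hre
        rw [uIcc_of_le h₁₂] at hre
        exact ⟨h₁.trans_le hre.1, hre.2.trans_lt h₂⟩
  rw [smul_eq_mul, smul_eq_mul] at hrect
  linear_combination hrect

lemma lineIntegral_eq_of_isBigO (hd : DifferentiableOn ℂ f (verticalStrip α β))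
    (hdec : f =O[𝓢] (fun z => ‖z‖ ^ (-κ))) (hκ : 1 < κ)
    (h₁ : α < c₁) (h₁' : c₁ < β) (h₂ : α < c₂) (h₂' : c₂ < β) :
    lineIntegral c₁ f = lineIntegral c₂ f := by
  wlog h₁₂ : c₁ ≤ c₂ generalizing c₁ c₂
  · exact (this h₂ h₂' h₁ h₁' (le_of_not_ge h₁₂)).symm
  have hint := fun {c} (hc : α < c) (hc' : c < β) =>
    integrable_verticalLine_of_isBigO hd.continuousOn hdec hκ hc hc'
  have hhor := tendsto_integral_horizontal_segment
    (tendsto_zero_of_isBigO_norm_rpow_neg (by linarith) inf_le_left hdec) h₁ h₂' h₁₂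
  have hlim := ((tendsto_integral_verticalLine (hint h₂ h₂')).sub
    (tendsto_integral_verticalLine (hint h₁ h₁')))
  have hlim' := (hhor.mono_left atTop_le_cocompact).sub
    (hhor.comp (tendsto_neg_atTop_atBot.mono_right atBot_le_cocompact))
  rw [sub_zero] at hlim'
  refine (sub_eq_zero.1 (tendsto_nhds_unique hlim (hlim'.congr fun T => ?_))).symm
  exact (verticalLine_integral_sub_eq_horizontal hd h₁ h₂' h₁₂ T).symm

lemma lineLaplace_eq_of_isBigO (hd : DifferentiableOn ℂ f (verticalStrip α β))
    (hdec : f =O[𝓢] (fun z => ‖z‖ ^ (-κ))) (hκ : 1 < κ)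
    (h₁ : α < c₁) (h₁' : c₁ < β) (h₂ : α < c₂) (h₂' : c₂ < β) (x : ℝ) :
    lineLaplace c₁ f x = lineLaplace c₂ f x := by
  refine lineIntegral_eq_of_isBigO (hd.mul (by fun_prop)) ?_ hκ h₁ h₁' h₂ h₂'
  simpa using hdec.mul ((isBigO_cexp_neg_mul_one x).mono inf_le_right)

lemma norm_lineLaplace_le_of_isBigO (hd : DifferentiableOn ℂ f (verticalStrip α β))
    (hdec : f =O[𝓢] (fun z => ‖z‖ ^ (-κ))) (hκ : 1 < κ) (h : α < c) (h' : c < β)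
    {c' : ℝ} (h₁ : α < c') (h₁' : c' < β) (x : ℝ) :
    ‖lineLaplace c f x‖ ≤ (∫ t : ℝ, ‖f (c' + t * I)‖) * Real.exp (-(c' * x)) := by
  rw [lineLaplace_eq_of_isBigO hd hdec hκ h h' h₁ h₁']
  exact norm_lineLaplace_le c' f x

lemma norm_exp_mul_lineLaplace_le (hd : DifferentiableOn ℂ f (verticalStrip α β))
    (hdec : f =O[𝓢] (fun z => ‖z‖ ^ (-κ))) (hκ : 1 < κ) (h : α < c) (h' : c < β)
    {c' : ℝ} (h₁ : α < c') (h₁' : c' < β) (u : ℂ) (x : ℝ) :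
    ‖cexp (u * x) * lineLaplace c f x‖ ≤
      (∫ t : ℝ, ‖f (c' + t * I)‖) * Real.exp ((u.re - c') * x) := by
  rw [norm_mul, norm_exp, mul_comm]
  refine (mul_le_mul_of_nonneg_right (norm_lineLaplace_le_of_isBigO hd hdec hκ h h' h₁ h₁' x)
    (by positivity)).trans_eq ?_
  rw [mul_assoc, ← Real.exp_add]
  congr 2
  simp only [mul_re, ofReal_re, ofReal_im, mul_zero, sub_zero]
  ring

lemma integrable_exp_mul_lineLaplace (hd : DifferentiableOn ℂ f (verticalStrip α β))
    (hdec : f =O[𝓢] (fun z => ‖z‖ ^ (-κ))) (hκ : 1 < κ) (h : α < c) (h' : c < β)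
    (hu : u ∈ verticalStrip α β) :
    Integrable fun x : ℝ => cexp (u * x) * lineLaplace c f x := by
  have hcont : Continuous fun x : ℝ => cexp (u * x) * lineLaplace c f x :=
    (by fun_prop : Continuous fun x : ℝ => cexp (u * x)).mul
      (continuous_lineLaplace (integrable_verticalLine_of_isBigO hd.continuousOn hdec hκ h h'))
  obtain ⟨hu₁, hu₂⟩ := hu
  have hbound (c' : ℝ) (h₁ : α < c') (h₁' : c' < β) :=
    norm_exp_mul_lineLaplace_le hd hdec hκ h h' h₁ h₁' u
  rw [← integrableOn_univ, ← Iic_union_Ioi (a := 0), integrableOn_union]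
  constructor
  · exact ((integrableOn_exp_mul_Iic (a := u.re - (α + u.re) / 2) (by linarith) 0).const_mul _
      ).mono' hcont.aestronglyMeasurable.restrict
      (.of_forall (hbound _ (by linarith) (by linarith)))
  · exact ((integrableOn_exp_mul_Ioi (a := u.re - (u.re + β) / 2) (by linarith) 0).const_mul _
      ).mono' hcont.aestronglyMeasurable.restrict
      (.of_forall (hbound _ (by linarith) (by linarith)))

theorem integral_exp_mul_lineLaplace_of_isBigO (hd : DifferentiableOn ℂ f (verticalStrip α β))
    (hdec : f =O[𝓢] (fun z => ‖z‖ ^ (-κ))) (hκ : 1 < κ) (h : α < c) (h' : c < β)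
    (hu : u ∈ verticalStrip α β) :
    ∫ x : ℝ, cexp (u * x) * lineLaplace c f x = 2 * Real.pi * I * f u := by
  have hline : ∀ s : ℝ, u + s * I = u.re + ((s + u.im : ℝ) : ℂ) * I := fun s => by
    apply Complex.ext <;> simp [add_comm]
  have hint := integrable_exp_mul_lineLaplace hd hdec hκ h h' hu
  simp_rw [lineLaplace_eq_of_isBigO hd hdec hκ h h' hu.1 hu.2] at hint ⊢
  refine integral_exp_mul_lineLaplace ?_ ?_ hint
  · simp_rw [hline]
    exact (integrable_verticalLine_of_isBigO hd.continuousOn hdec hκ hu.1 hu.2).comp_add_right _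
  · refine (hd.continuousOn.continuousAt (isOpen_verticalStrip.mem_nhds ?_)).comp
      (by fun_prop)
    simpa using hu

lemma exists_norm_psiFun_exp_le (hd : DifferentiableOn ℂ W (verticalStrip α β))
    (hdec : W =O[𝓢] (fun z => ‖z‖ ^ (-ε))) (hε : 0 < ε) (hb : W b = 0)
    (hbS : b ∈ verticalStrip α β) (hbc : b.re < c) (hc : c < β)
    {c' : ℝ} (h₁ : α < c') (h₁' : c' < β) :
    ∃ C, 0 ≤ C ∧ ∀ x, ‖psiFun c W b (Real.exp x)‖ ≤ C * Real.exp (-(c' * x)) := by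
  refine ⟨‖(2 * Real.pi * I * deriv W b)⁻¹‖ * ∫ t : ℝ, ‖dslope W b (c' + t * I)‖,
    by positivity, fun x => ?_⟩
  rw [psiFun_exp_eq hbc hb, norm_mul]
  refine (mul_le_mul_of_nonneg_left ?_ (norm_nonneg _)).trans_eq (mul_assoc _ _ _).symm
  exact norm_lineLaplace_le_of_isBigO
    (differentiableOn_dslope_verticalStrip hd hbS)
    (isBigO_dslope_of_isBigO inf_le_left hdec hb) (by linarith) (hbS.1.trans hbc) hc h₁ h₁' x

lemma integrable_exp_mul_psiFun (hd : DifferentiableOn ℂ W (verticalStrip α β))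
    (hdec : W =O[𝓢] (fun z => ‖z‖ ^ (-ε))) (hε : 0 < ε) (hb : W b = 0)
    (hbS : b ∈ verticalStrip α β) (hbc : b.re < c) (hc : c < β)
    (hu : u ∈ verticalStrip α β) :
    Integrable fun x : ℝ => cexp (u * x) * psiFun c W b (Real.exp x) := by
  simp_rw [psiFun_exp_eq hbc hb, mul_left_comm (cexp _)]
  exact (integrable_exp_mul_lineLaplace
    (differentiableOn_dslope_verticalStrip hd hbS)
    (isBigO_dslope_of_isBigO inf_le_left hdec hb) (by linarith) (hbS.1.trans hbc) hc hu
    ).const_mul _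

lemma integral_exp_mul_psiFun (hd : DifferentiableOn ℂ W (verticalStrip α β))
    (hdec : W =O[𝓢] (fun z => ‖z‖ ^ (-ε))) (hε : 0 < ε) (hb : W b = 0)
    (hbS : b ∈ verticalStrip α β) (hbc : b.re < c) (hc : c < β)
    (hu : u ∈ verticalStrip α β) :
    ∫ x : ℝ, cexp (u * x) * psiFun c W b (Real.exp x) = dslope W b u / deriv W b := by
  simp_rw [psiFun_exp_eq hbc hb, mul_left_comm (cexp _), integral_const_mul,
    integral_exp_mul_lineLaplace_of_isBigO
      (differentiableOn_dslope_verticalStrip hd hbS)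
      (isBigO_dslope_of_isBigO inf_le_left hdec hb) (by linarith) (hbS.1.trans hbc) hc hu]
  have hπ : (2 * Real.pi * I : ℂ) ≠ 0 := by simp [Real.pi_ne_zero]
  rw [mul_inv, mul_assoc, mul_left_comm (deriv W b)⁻¹, inv_mul_cancel_left₀ hπ,
    div_eq_inv_mul]

end VerticalStrip

theorem biorthogonality_psi_general
    (N : ℕ) (α β c : ℝ) (W : ℂ → ℂ) (a : Fin N → ℂ)
    (hW : AnalyticOnNhd ℂ W {z : ℂ | α < z.re ∧ z.re < β})
    (hWdecay : ∃ ε > (0:ℝ), ∃ M R : ℝ, ∀ z : ℂ, α < z.re → z.re < β →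
      R ≤ ‖z‖ → ‖W z‖ ≤ M * ‖z‖ ^ (-ε))
    (hc : α < c ∧ c < β)
    (hzeros : ∀ m, W (a m) = 0)
    (hastrip : ∀ m, α < (a m).re ∧ (a m).re < c)
    (hdistinct : Function.Injective a)
    (hsimple : ∀ m, deriv W (a m) ≠ 0) :
    -- the decay estimates for `ψ_m(e^x)` at `∓∞`, for every `δ > 0`
    (∀ (m : Fin N) (δ : ℝ), 0 < δ →
      (∃ C X : ℝ, ∀ x : ℝ, x ≤ X →
        ‖psiFun c W (a m) (Real.exp x)‖ ≤ C * Real.exp (-(α + δ) * x)) ∧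
      (∃ C X : ℝ, ∀ x : ℝ, X ≤ x →
        ‖psiFun c W (a m) (Real.exp x)‖ ≤ C * Real.exp (-(β - δ) * x))) ∧
    -- absolute convergence of the biorthogonality integrals
    (∀ m k : Fin N,
      Integrable (fun x : ℝ => Complex.exp (a m * (x : ℂ)) * psiFun c W (a k) (Real.exp x))) ∧
    -- the biorthogonality relations
    (∀ m k : Fin N,
      ∫ x : ℝ, Complex.exp (a m * (x : ℂ)) * psiFun c W (a k) (Real.exp x)
        = if m = k then 1 else 0) := by
  obtain ⟨hc₁, hc₂⟩ := hc
  obtain ⟨ε, hε, M, R, hWbound⟩ := hWdecay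
  have hd := hW.differentiableOn
  have hdec := isBigO_verticalStrip_of_bound hWbound
  have hS (m : Fin N) : a m ∈ verticalStrip α β := ⟨(hastrip m).1, (hastrip m).2.trans hc₂⟩
  have hdecay (k : Fin N) (c' : ℝ) :=
    exists_norm_psiFun_exp_le hd hdec hε (hzeros k) (hS k) (hastrip k).2 hc₂ (c' := c')
  refine ⟨fun m δ hδ => ⟨?_, ?_⟩, fun m k => integrable_exp_mul_psiFun hd hdec hε (hzeros k)
    (hS k) (hastrip k).2 hc₂ (hS m), fun m k => ?_⟩
  · obtain ⟨C, hC, hCb⟩ := hdecay m _ (lt_min (by linarith) hc₁)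
      ((min_le_right (α + δ) c).trans_lt hc₂)
    exact ⟨C, 0, fun x hx => (hCb x).trans (by gcongr; nlinarith [min_le_left (α + δ) c])⟩
  · obtain ⟨C, hC, hCb⟩ := hdecay m _ (hc₁.trans_le (le_max_right (β - δ) c))
      (max_lt (by linarith) hc₂)
    exact ⟨C, 0, fun x hx => (hCb x).trans (by gcongr; nlinarith [le_max_left (β - δ) c])⟩
  · rw [integral_exp_mul_psiFun hd hdec hε (hzeros k) (hS k) (hastrip k).2 hc₂ (hS m)]
    split_ifs with hmk
    · rw [hmk, dslope_same, div_self (hsimple k)]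
    · rw [dslope_of_ne _ (hdistinct.ne hmk), slope_def_field, hzeros, hzeros, sub_zero,
        zero_div, zero_div]

theorem biorthogonality_psi
    (N : ℕ) (α β c : ℝ) (W : ℂ → ℂ) (γ : ℝ → ℂ) (a : Fin N → ℂ)
    (hαβ : α < β)
    (hW : AnalyticOnNhd ℂ W {z : ℂ | α < z.re ∧ z.re < β})
    (hWnontriv : ∃ z : ℂ, (α < z.re ∧ z.re < β) ∧ W z ≠ 0)
    (hWdecay : ∃ ε > (0:ℝ), ∃ M R : ℝ, ∀ z : ℂ, α < z.re → z.re < β →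
      R ≤ ‖z‖ → ‖W z‖ ≤ M * ‖z‖ ^ (-ε))
    (hc : α < c ∧ c < β)
    (hγ : ContDiff ℝ 1 γ) (hγloop : γ 0 = γ 1)
    (hγsimple : ∀ s t : ℝ, s ∈ Set.Ico (0:ℝ) 1 → t ∈ Set.Ico (0:ℝ) 1 → γ s = γ t → s = t)
    (hγstrip : ∀ s : ℝ, α < (γ s).re ∧ (γ s).re < c)
    (hzeros : ∀ m, W (a m) = 0)
    (hastrip : ∀ m, α < (a m).re ∧ (a m).re < c)
    (hwind : ∀ m, windingNumber γ (a m) = 1)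
    (hγavoid : ∀ (s : ℝ), W (γ s) ≠ 0)
    (hnoother : ∀ z : ℂ, α < z.re → z.re < β → W z = 0 →
      (∃ m, z = a m) ∨ windingNumber γ z = 0)
    (hdistinct : Function.Injective a)
    (hsimple : ∀ m, deriv W (a m) ≠ 0) :
    -- the decay estimates for `ψ_m(e^x)` at `∓∞`, for every `δ > 0`
    (∀ (m : Fin N) (δ : ℝ), 0 < δ →
      (∃ C X : ℝ, ∀ x : ℝ, x ≤ X →
        ‖psiFun c W (a m) (Real.exp x)‖ ≤ C * Real.exp (-(α + δ) * x)) ∧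
      (∃ C X : ℝ, ∀ x : ℝ, X ≤ x →
        ‖psiFun c W (a m) (Real.exp x)‖ ≤ C * Real.exp (-(β - δ) * x))) ∧
    -- absolute convergence of the biorthogonality integrals
    (∀ m k : Fin N,
      Integrable (fun x : ℝ => Complex.exp (a m * (x : ℂ)) * psiFun c W (a k) (Real.exp x))) ∧
    -- the biorthogonality relations
    (∀ m k : Fin N,
      ∫ x : ℝ, Complex.exp (a m * (x : ℂ)) * psiFun c W (a k) (Real.exp x)
        = if m = k then 1 else 0) :=
  biorthogonality_psi_general N α β c W a hW hWdecay hc hzeros hastrip hdistinct hsimple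

end
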